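/- The displacement operators and displaced parity operators are Fourier transforms of each other: (1/d) Σ_{α,β ∈ Z/dZ} D(α,β,0) ω(βγ − αδ) = P(γ,δ) for all γ,δ ∈ Z/dZ. -/

import Mathlib

open Matrix Complex BigOperators Finset Subgroup

noncomputable section

/-- The phase `ω(a) = exp(2πia/d)` for `a : ZMod d`. -/
def ω (d : ℕ) (a : ZMod d) : ℂ := Complex.exp (2 * Real.pi * Complex.I * (a.val : ℂ) / d)

/-- The clock operator `Z`, with `Z|j⟩ = ω(j)|j⟩`. -/
def Zop (d : ℕ) : Matrix (ZMod d) (ZMod d) ℂ := Matrix.diagonal (fun j => ω d j)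

/-- The shift operator `X`, with `X|j⟩ = |j+1⟩`. -/
def Xop (d : ℕ) : Matrix (ZMod d) (ZMod d) ℂ :=
  Matrix.of fun j k => if j = k + 1 then 1 else 0

/-- The finite Fourier transform, with entries `F_{jk} = ω(jk)/√d`. -/
def Fop (d : ℕ) : Matrix (ZMod d) (ZMod d) ℂ :=
  Matrix.of fun j k => ω d (j * k) / Real.sqrt d

/-- `2⁻¹ = (d+1)/2` in `ZMod d` (for odd `d`). -/
def half (d : ℕ) : ZMod d := (((d + 1) / 2 : ℕ) : ZMod d)

/-- The general displacement operator `D(α,β,γ) = ω(γ - 2⁻¹αβ) Z^α X^β`. -/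
def Dop (d : ℕ) [NeZero d] (α β γ : ZMod d) : Matrix (ZMod d) (ZMod d) ℂ :=
  ω d (γ - half d * (α * β)) • (Zop d ^ α.val * Xop d ^ β.val)

/-- The parity operator `P = F²`. -/
def Pop (d : ℕ) [NeZero d] : Matrix (ZMod d) (ZMod d) ℂ := Fop d ^ 2

/-- The displacement-parity operator `𝔇(α,β,γ,ν) = D(α,β,γ) P^ν`. -/
def DPop (d : ℕ) [NeZero d] (α β γ : ZMod d) (ν : ZMod 2) : Matrix (ZMod d) (ZMod d) ℂ :=
  Dop d α β γ * Pop d ^ ν.val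

/-- The sign `(-1)^ν` in `ZMod d`, for `ν : ZMod 2`. -/
def sgn (d : ℕ) (ν : ZMod 2) : ZMod d := (-1 : ZMod d) ^ ν.val

/-- The Heisenberg-Weyl group, as a subgroup of the units of the matrix ring,
generated by (in fact, consisting of) the displacement operators `D(α,β,γ)`. -/
def HW (d : ℕ) [NeZero d] : Subgroup (Matrix (ZMod d) (ZMod d) ℂ)ˣ :=
  Subgroup.closure {u | ∃ α β γ : ZMod d, (u : Matrix (ZMod d) (ZMod d) ℂ) = Dop d α β γ}

/-- The subgroup of phases `ω(a)·1`. -/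
def Phases (d : ℕ) [NeZero d] : Subgroup (Matrix (ZMod d) (ZMod d) ℂ)ˣ :=
  Subgroup.closure {u | ∃ a : ZMod d, (u : Matrix (ZMod d) (ZMod d) ℂ) = ω d a • (1 : Matrix (ZMod d) (ZMod d) ℂ)}

/-- The Heisenberg-Weyl-parity group, as a subgroup of the units of the matrix ring,
generated by (in fact, consisting of) the operators `𝔇(α,β,γ,ν)`. -/
def HWP (d : ℕ) [NeZero d] : Subgroup (Matrix (ZMod d) (ZMod d) ℂ)ˣ :=
  Subgroup.closure {u | ∃ (α β γ : ZMod d) (ν : ZMod 2),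
    (u : Matrix (ZMod d) (ZMod d) ℂ) = DPop d α β γ ν}

/-! Entrywise, `D(α,β,0)` is supported on `j = k + β`, so the `β`-sum collapses and the `α`-sum
becomes a character sum, equal to `d` exactly when `2⁻¹(j + k) = δ`. On the other side `P = F²`
is the reflection `|k⟩ ↦ |-k⟩` by the same orthogonality of characters, so `D(2γ,2δ,0) P` is
supported on `j + k = 2δ`, where the two phases agree. -/

section
variable {d : ℕ} [NeZero d]

lemma ω_eq_stdAddChar (a : ZMod d) : ω d a = ZMod.stdAddChar a := by
  rw [ZMod.stdAddChar_apply, ZMod.toCircle_apply, ω]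

lemma ω_add (a b : ZMod d) : ω d (a + b) = ω d a * ω d b := by
  simp only [ω_eq_stdAddChar, AddChar.map_add_eq_mul]

lemma ω_pow (a : ZMod d) (n : ℕ) : ω d a ^ n = ω d (n * a) := by
  simp only [ω_eq_stdAddChar, ← AddChar.map_nsmul_eq_pow, nsmul_eq_mul]

lemma sum_ω_mul (t : ZMod d) : ∑ a : ZMod d, ω d (a * t) = if t = 0 then (d : ℂ) else 0 := by
  simp only [ω_eq_stdAddChar, AddChar.sum_mulShift t (ZMod.isPrimitive_stdAddChar d), ZMod.card,
    Nat.cast_ite, Nat.cast_zero]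

lemma Xop_pow_apply (n : ℕ) (j k : ZMod d) :
    (Xop d ^ n) j k = if j = k + n then 1 else 0 := by
  induction n generalizing k with
  | zero => simp [Matrix.one_apply]
  | succ n ih =>
    simp only [pow_succ, Matrix.mul_apply, ih]
    simp only [Xop, Matrix.of_apply, mul_ite, mul_one, mul_zero, Finset.sum_ite_eq',
      Finset.mem_univ, if_true, Nat.cast_succ, add_assoc, add_comm (1 : ZMod d)]

lemma Dop_apply (α β γ j k : ZMod d) :
    Dop d α β γ j k = if j = k + β then ω d (γ - half d * (α * β) + α * j) else 0 := by
  simp only [Dop, Zop, Matrix.smul_apply, Matrix.diagonal_pow, Matrix.diagonal_mul, Pi.pow_apply,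
    Xop_pow_apply, ZMod.natCast_val, ZMod.cast_id', id, ω_pow, ω_add, smul_eq_mul, mul_ite,
    mul_one, mul_zero]

lemma Pop_apply (j k : ZMod d) : Pop d j k = if j + k = 0 then 1 else 0 := by
  have hsqrt : (Real.sqrt d : ℂ) * Real.sqrt d = d := by
    rw [← Complex.ofReal_mul, Real.mul_self_sqrt (Nat.cast_nonneg d), Complex.ofReal_natCast]
  have hd : (d : ℂ) ≠ 0 := Nat.cast_ne_zero.mpr (NeZero.ne d)
  calc Pop d j k = (∑ m : ZMod d, ω d (m * (j + k))) / d := by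
        simp only [Pop, sq, Matrix.mul_apply, Fop, Matrix.of_apply, div_mul_div_comm, ← ω_add,
          hsqrt, ← Finset.sum_div]
        congr 1
        exact Finset.sum_congr rfl fun m _ => congr_arg _ (by ring)
    _ = if j + k = 0 then 1 else 0 := by
        rw [sum_ω_mul]
        split_ifs
        · exact div_self hd
        · exact zero_div _

lemma mul_Pop_apply (A : Matrix (ZMod d) (ZMod d) ℂ) (j k : ZMod d) :
    (A * Pop d) j k = A j (-k) := by
  simp only [Matrix.mul_apply, Pop_apply, mul_ite, mul_one, mul_zero, add_eq_zero_iff_eq_neg,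
    Finset.sum_ite_eq', Finset.mem_univ, if_true]

lemma sum_ω_smul_Dop_apply (γ δ j k : ZMod d) :
    (∑ α : ZMod d, ∑ β : ZMod d, ω d (β * γ - α * δ) • Dop d α β 0) j k
      = ω d ((j - k) * γ) * ∑ α : ZMod d, ω d (α * (j - half d * (j - k) - δ)) := by
  simp only [Matrix.sum_apply, Matrix.smul_apply, Dop_apply, smul_eq_mul, mul_ite, mul_zero,
    eq_comm (a := j), ← eq_sub_iff_add_eq', Finset.sum_ite_eq', Finset.mem_univ, if_true,
    Finset.mul_sum, ← ω_add]
  exact Finset.sum_congr rfl fun α _ => congr_arg _ (by ring)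

end

lemma two_mul_half {d : ℕ} (hodd : Odd d) : (2 : ZMod d) * half d = 1 := by
  obtain ⟨k, rfl⟩ := hodd
  rw [half, show (2 * k + 1 + 1) / 2 = k + 1 by omega]
  have hd := ZMod.natCast_self (2 * k + 1)
  push_cast at hd ⊢
  linear_combination hd

/-- Fourier transform relation between displacement operators and displaced
parity operators: `(1/d) Σ_{α,β} D(α,β,0) ω(βγ - αδ) = P(γ,δ)`. -/
theorem displacement_fourier_displaced_parity (d : ℕ) [NeZero d] (hodd : Odd d)
    (γ δ : ZMod d) :
    (1 / (d : ℂ)) • ∑ α : ZMod d, ∑ β : ZMod d, ω d (β * γ - α * δ) • Dop d α β 0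
      = Dop d (2 * γ) (2 * δ) 0 * Pop d := by
  have h2 := two_mul_half hodd
  have hd : (d : ℂ) ≠ 0 := Nat.cast_ne_zero.mpr (NeZero.ne d)
  ext j k
  have hkey : j - half d * (j - k) - δ = half d * (j + k - 2 * δ) := by
    linear_combination (δ - j) * h2
  rw [Matrix.smul_apply, sum_ω_smul_Dop_apply, mul_Pop_apply, Dop_apply, sum_ω_mul, hkey]
  by_cases hc : j = -k + 2 * δ
  · rw [if_pos (by rw [hc]; ring), if_pos hc, smul_eq_mul, one_div, inv_mul_eq_iff_eq_mul₀ hd,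
      mul_comm]
    congr 2
    linear_combination 2 * γ * δ * h2 - γ * hc
  · have hne : half d * (j + k - 2 * δ) ≠ 0 := fun h =>
      hc (by linear_combination 2 * h - (j + k - 2 * δ) * h2)
    rw [if_neg hne, if_neg hc, mul_zero, smul_zero]
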